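/- arXiv:math/0701029 — 5 statements merged into one kernel-verified Lean document; each statement's English description precedes it below -/
import Mathlib

section
/- If G acts transitively on a finite set A with |A| ≥ 2, then the union of the stabilizers of points of A has cardinality strictly less than |G|. -/
/-- If a finite group `G` acts transitively on a finite set `A` with at least two
elements, then the union of the point stabilizers has cardinality strictly less
than `|G|`. -/
theorem card_union_stabilizers_lt
    (G A : Type*) [Group G] [Fintype G] [Fintype A] [MulAction G A]
    (htrans : ∀ x y : A, ∃ g : G, g • x = y)
    (hA : 2 ≤ Fintype.card A) :
    Nat.card {g : G | ∃ x : A, g • x = x} < Nat.card G := by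
  classical
  have hAne : Nonempty A := Fintype.card_pos_iff.mp (by omega)
  have : MulAction.IsPretransitive G A := ⟨htrans⟩
  -- Burnside
  have hb : (∑ g : G, Fintype.card (MulAction.fixedBy A g))
      = Fintype.card (Quotient (MulAction.orbitRel G A)) * Fintype.card G :=
    MulAction.sum_card_fixedBy_eq_card_orbits_mul_card_group G A
  have hΩ : Fintype.card (Quotient (MulAction.orbitRel G A)) = 1 := by
    obtain ⟨a⟩ := hAne
    refine Fintype.card_eq_one_iff.mpr ⟨⟦a⟧, ?_⟩
    rintro ⟨b⟩
    exact Quotient.sound (MulAction.orbitRel_apply.mpr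
      (MulAction.orbit_eq_univ G a ▸ Set.mem_univ b : b ∈ MulAction.orbit G a))
  rw [hΩ, one_mul] at hb
  -- the set as a Finset
  set S : Finset G := Finset.univ.filter (fun g => ∃ x : A, g • x = x) with hS
  have hcard : Nat.card {g : G | ∃ x : A, g • x = x} = S.card := by
    rw [Nat.card_eq_fintype_card]
    exact (Set.toFinset_card _).symm.trans (congrArg Finset.card (by
      ext g; simp [hS, Set.mem_toFinset]))
  rw [hcard, Nat.card_eq_fintype_card]
  have hsum : (∑ g ∈ S, Fintype.card (MulAction.fixedBy A g))
      = ∑ g : G, Fintype.card (MulAction.fixedBy A g) := by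
    refine Finset.sum_subset (Finset.subset_univ S) ?_
    intro g _ hg
    simp only [hS, Finset.mem_filter, Finset.mem_univ, true_and] at hg
    push_neg at hg
    refine Fintype.card_eq_zero_iff.mpr ⟨fun ⟨x, hx⟩ => hg x hx⟩
  have h1 : (1 : G) ∈ S := by
    obtain ⟨a⟩ := hAne
    simp only [hS, Finset.mem_filter, Finset.mem_univ, true_and]
    exact ⟨a, one_smul G a⟩
  have hlt : S.card < ∑ g ∈ S, Fintype.card (MulAction.fixedBy A g) := by
    have := Finset.sum_lt_sum (f := fun _ : G => 1)
      (g := fun g => Fintype.card (MulAction.fixedBy A g))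
      (s := S)
      (fun g hg => by
        simp only [hS, Finset.mem_filter, Finset.mem_univ, true_and] at hg
        obtain ⟨x, hx⟩ := hg
        exact Fintype.card_pos_iff.mpr ⟨⟨x, hx⟩⟩)
      ⟨1, h1, by
        have : Fintype.card (MulAction.fixedBy A (1 : G)) = Fintype.card A := by
          refine Fintype.card_congr (Equiv.subtypeUnivEquiv (fun x => by
            simp [MulAction.mem_fixedBy]))
        show (1:ℕ) < Fintype.card (MulAction.fixedBy A (1:G))
        omega⟩
    simpa using this
  calc S.card < ∑ g ∈ S, Fintype.card (MulAction.fixedBy A g) := hlt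
    _ = ∑ g : G, Fintype.card (MulAction.fixedBy A g) := hsum
    _ = Fintype.card G := hb
end

section
/- Finitely many pairwise distinct Galois extensions E_1, ..., E_n of a field K, each with Gal(E_i/K) a nonabelian finite simple group, are linearly disjoint over K; in particular Gal(E_1⋯E_n/K) is isomorphic to the direct product of the groups Gal(E_i/K). -/
/-!
Let `G = Gal(E₁⋯Eₙ/K)` and let `Nᵢ` be the kernel of the surjective restriction
`G → Gal(Eᵢ/K)`; the `Nᵢ` intersect trivially. As `G/Nᵢ` is simple, `Nᵢ` is a maximal normal
subgroup, and as `G/Nᵢ` is moreover nonabelian, `Nᵢ` is prime among normal subgroups: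
if `A ⊓ B ≤ Nᵢ` but neither `A` nor `B` lies in `Nᵢ`, both map onto `G/Nᵢ`, while their
commutator `⁅A, B⁆ ≤ A ⊓ B` maps to `1`. Hence distinct `Nᵢ` satisfy `Nᵢ ⊔ ⋂_{j ∈ s} Nⱼ = G`
for `i ∉ s`, and the Chinese remainder argument makes `G → ∏ Gal(Eᵢ/K)` an isomorphism.
Comparing orders gives `[E₁⋯Eₙ : K] = ∏ [Eᵢ : K]`; applied also to the compositum of all
but one `Eᵢ`, this is linear disjointness by counting degrees.
-/

instance Subgroup.normal_biInf {G ι : Type*} [Group G] {A : ι → Subgroup G}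
    [∀ i, (A i).Normal] {p : ι → Prop} : (⨅ i, ⨅ _ : p i, A i).Normal :=
  Subgroup.normal_iInf_normal fun _ => Subgroup.normal_iInf_normal fun _ => inferInstance

namespace MonoidHom

variable {G ι : Type*} [Group G] {Q : ι → Type*} [∀ i, Group (Q i)]

theorem ker_pi (f : ∀ i, G →* Q i) : (MonoidHom.pi f).ker = ⨅ i, (f i).ker := by
  ext g
  simp [funext_iff, Subgroup.mem_iInf]

theorem pi_surjective_of_ker_sup_eq_top [Finite ι] (f : ∀ i, G →* Q i)
    (hf : ∀ i, Function.Surjective (f i))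
    (hcomax : ∀ (s : Finset ι) (i : ι), i ∉ s → (f i).ker ⊔ ⨅ j ∈ s, (f j).ker = ⊤) :
    Function.Surjective (MonoidHom.pi f) := by
  classical
  have := Fintype.ofFinite ι
  intro q
  suffices ∀ s : Finset ι, ∃ g : G, ∀ i ∈ s, f i g = q i by
    obtain ⟨g, hg⟩ := this Finset.univ
    exact ⟨g, funext fun i => hg i (Finset.mem_univ i)⟩
  intro s
  induction s using Finset.induction_on with
  | empty => exact ⟨1, by simp⟩
  | insert k s hk ih =>
    obtain ⟨g, hg⟩ := ih
    obtain ⟨x, hx⟩ := hf k (q k * (f k g)⁻¹)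
    have hx_mem : x ∈ (f k).ker ⊔ ⨅ j ∈ s, (f j).ker := hcomax s k hk ▸ Subgroup.mem_top x
    obtain ⟨a, ha, b, hb, rfl⟩ := Subgroup.mem_sup_of_normal_left.mp hx_mem
    have hb' : ∀ j ∈ s, f j b = 1 := fun j hj => by
      simpa using Subgroup.mem_iInf.mp (Subgroup.mem_iInf.mp hb j) hj
    refine ⟨b * g, fun i hi => ?_⟩
    rcases Finset.mem_insert.mp hi with rfl | hi
    · rw [map_mul, MonoidHom.mem_ker.mp ha, one_mul] at hx
      rw [map_mul, hx, inv_mul_cancel_right]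
    · rw [map_mul, hb' i hi, one_mul, hg i hi]

section SimpleTarget

variable {S : Type*} [Group S] {f : G →* S}

theorem ker_ne_top_of_surjective [Nontrivial S] (hf : Function.Surjective f) : f.ker ≠ ⊤ := by
  intro h
  obtain ⟨a, b, hab⟩ := exists_pair_ne S
  obtain ⟨x, rfl⟩ := hf a
  obtain ⟨y, rfl⟩ := hf b
  rw [ker_eq_top_iff] at h
  simp [h] at hab

variable [IsSimpleGroup S]

theorem eq_ker_or_eq_top_of_ker_le (hf : Function.Surjective f) {M : Subgroup G}
    [hM : M.Normal] (hle : f.ker ≤ M) : M = f.ker ∨ M = ⊤ := by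
  rcases (hM.map f hf).eq_bot_or_eq_top with h | h
  · exact .inl <| le_antisymm ((Subgroup.map_eq_bot_iff M).mp h) hle
  · have := Subgroup.comap_map_eq f M
    rw [h, Subgroup.comap_top, sup_of_le_left hle] at this
    exact .inr this.symm

theorem le_ker_or_le_ker_of_inf_le_ker (hf : Function.Surjective f)
    (hS : ¬ ∀ a b : S, a * b = b * a) {A B : Subgroup G} [hA : A.Normal] [hB : B.Normal]
    (h : A ⊓ B ≤ f.ker) : A ≤ f.ker ∨ B ≤ f.ker := by
  rcases (hA.map f hf).eq_bot_or_eq_top with hA | hA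
  · exact .inl <| (Subgroup.map_eq_bot_iff A).mp hA
  rcases (hB.map f hf).eq_bot_or_eq_top with hB | hB
  · exact .inr <| (Subgroup.map_eq_bot_iff B).mp hB
  have hcomm : ⁅A.map f, B.map f⁆ = ⊥ := by
    rw [← Subgroup.map_commutator, Subgroup.map_eq_bot_iff]
    exact (Subgroup.commutator_le_inf A B).trans h
  rw [hA, hB] at hcomm
  exact absurd (fun a b => Subgroup.commutator_eq_bot_iff_le_centralizer.mp hcomm
    (Subgroup.mem_top b) a (Subgroup.mem_top a)) hS

theorem exists_le_ker_of_biInf_le_ker (hf : Function.Surjective f)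
    (hS : ¬ ∀ a b : S, a * b = b * a) (A : ι → Subgroup G) [∀ i, (A i).Normal]
    (s : Finset ι) (h : ⨅ j ∈ s, A j ≤ f.ker) : ∃ j ∈ s, A j ≤ f.ker := by
  classical
  induction s using Finset.induction_on with
  | empty =>
    simp only [Finset.notMem_empty, iInf_false, iInf_top, top_le_iff] at h
    exact absurd h (ker_ne_top_of_surjective hf)
  | insert k s _ ih =>
    rw [Finset.iInf_insert] at h
    rcases le_ker_or_le_ker_of_inf_le_ker hf hS h with hk | hs
    · exact ⟨k, Finset.mem_insert_self k s, hk⟩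
    · obtain ⟨j, hj, hjle⟩ := ih hs
      exact ⟨j, Finset.mem_insert_of_mem hj, hjle⟩

end SimpleTarget

variable [∀ i, IsSimpleGroup (Q i)] {f : ∀ i, G →* Q i}

theorem ker_sup_biInf_ker_eq_top (hf : ∀ i, Function.Surjective (f i))
    (hQ : ∀ i, ¬ ∀ a b : Q i, a * b = b * a) (hker : Function.Injective fun i => (f i).ker)
    {s : Finset ι} {i : ι} (hi : i ∉ s) : (f i).ker ⊔ ⨅ j ∈ s, (f j).ker = ⊤ := by
  refine (eq_ker_or_eq_top_of_ker_le (hf i) le_sup_left).resolve_left fun h => ?_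
  obtain ⟨j, hj, hji⟩ := exists_le_ker_of_biInf_le_ker (hf i) (hQ i) (fun j => (f j).ker) s
    (h ▸ le_sup_right)
  have hij : (f i).ker = (f j).ker :=
    (eq_ker_or_eq_top_of_ker_le (hf j) hji).resolve_right (ker_ne_top_of_surjective (hf i))
  exact hi (hker hij ▸ hj)

theorem pi_surjective_of_isSimpleGroup [Finite ι] (hf : ∀ i, Function.Surjective (f i))
    (hQ : ∀ i, ¬ ∀ a b : Q i, a * b = b * a) (hker : Function.Injective fun i => (f i).ker) :
    Function.Surjective (MonoidHom.pi f) :=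
  pi_surjective_of_ker_sup_eq_top f hf fun _ _ hi => ker_sup_biInf_ker_eq_top hf hQ hker hi

end MonoidHom

namespace IntermediateField

variable {K Ω : Type*} [Field K] [Field Ω] [Algebra K Ω]

instance normal_restrict {E L : IntermediateField K Ω} (h : E ≤ L) [Normal K E] :
    Normal K (restrict h) :=
  Normal.of_algEquiv (restrictAlgEquiv h)

noncomputable def restrictGal {E L : IntermediateField K Ω} (h : E ≤ L) [Normal K E] :
    Gal(L/K) →* Gal(E/K) :=
  (AlgEquiv.autCongr (restrictAlgEquiv h).symm).toMonoidHom.comp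
    (AlgEquiv.restrictNormalHom (restrict h))

theorem restrictGal_surjective {E L : IntermediateField K Ω} (h : E ≤ L) [Normal K E]
    [Normal K L] : Function.Surjective (restrictGal h) :=
  (AlgEquiv.autCongr _).surjective.comp (AlgEquiv.restrictNormalHom_surjective L)

theorem ker_restrictGal {E L : IntermediateField K Ω} (h : E ≤ L) [Normal K E] :
    (restrictGal h).ker = (restrict h).fixingSubgroup := by
  rw [restrictGal, MonoidHom.ker_comp_of_injective _ _ (AlgEquiv.autCongr _).injective,
    restrictNormalHom_ker]

variable {ι : Type*} (E : ι → IntermediateField K Ω)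

instance isGalois_iSup [∀ i, IsGalois K (E i)] : IsGalois K ↥(⨆ i, E i) := ⟨⟩

theorem iSup_restrict_le_iSup_eq_top : ⨆ i, restrict (le_iSup E i) = ⊤ :=
  lift_injective _ <| by
    rw [lift_top, lift, IntermediateField.map_iSup]
    exact iSup_congr fun i => lift_restrict _

theorem iInf_ker_restrictGal_eq_bot [∀ i, Normal K (E i)] :
    ⨅ i, (restrictGal (le_iSup E i)).ker = ⊥ := by
  refine eq_bot_iff.mpr fun σ hσ => ?_
  simp only [ker_restrictGal, Subgroup.mem_iInf] at hσ
  have hfix : ⨆ i, restrict (le_iSup E i) ≤ fixedField (Subgroup.zpowers σ) :=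
    iSup_le fun i => (le_iff_le _ _).mpr (Subgroup.zpowers_le.mpr (hσ i))
  rwa [iSup_restrict_le_iSup_eq_top, le_iff_le, fixingSubgroup_top, Subgroup.zpowers_le] at hfix

theorem injective_ker_restrictGal [Finite ι] [∀ i, FiniteDimensional K (E i)]
    [∀ i, IsGalois K (E i)] (hE : Function.Injective E) :
    Function.Injective fun i => (restrictGal (le_iSup E i)).ker := by
  intro i j hij
  simp only [ker_restrictGal] at hij
  have hres : restrict (le_iSup E i) = restrict (le_iSup E j) := by
    rw [← IsGalois.fixedField_fixingSubgroup (restrict (le_iSup E i)), hij,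
      IsGalois.fixedField_fixingSubgroup]
  exact hE (by rw [← lift_restrict (le_iSup E i), hres, lift_restrict])

variable [∀ i, FiniteDimensional K (E i)] [∀ i, IsGalois K (E i)]
  [∀ i, IsSimpleGroup Gal(E i/K)]

noncomputable def iSupGalEquivPi [Finite ι] (hE : Function.Injective E)
    (hnonab : ∀ i, ¬ ∀ a b : Gal(E i/K), a * b = b * a) :
    Gal(↥(⨆ i, E i)/K) ≃* ∀ i, Gal(E i/K) :=
  MulEquiv.ofBijective (MonoidHom.pi fun i => restrictGal (le_iSup E i))
    ⟨(MonoidHom.ker_eq_bot_iff _).mp <| (MonoidHom.ker_pi _).trans (iInf_ker_restrictGal_eq_bot E),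
      MonoidHom.pi_surjective_of_isSimpleGroup (fun _ => restrictGal_surjective _) hnonab
        (injective_ker_restrictGal E hE)⟩

theorem finrank_iSup_eq_prod [Fintype ι] (hE : Function.Injective E)
    (hnonab : ∀ i, ¬ ∀ a b : Gal(E i/K), a * b = b * a) :
    Module.finrank K ↥(⨆ i, E i) = ∏ i, Module.finrank K (E i) := by
  simp only [← IsGalois.card_aut_eq_finrank]
  rw [Nat.card_congr (iSupGalEquivPi E hE hnonab).toEquiv, Nat.card_pi]

theorem linearDisjoint_iSup_compl [Finite ι] (hE : Function.Injective E)
    (hnonab : ∀ i, ¬ ∀ a b : Gal(E i/K), a * b = b * a) (i : ι) :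
    (E i).LinearDisjoint ↥(⨆ j ∈ ({i}ᶜ : Set ι), E j) := by
  classical
  have := Fintype.ofFinite ι
  have hsub : ⨆ j ∈ ({i}ᶜ : Set ι), E j = ⨆ j : ↥({i}ᶜ : Set ι), E j := iSup_subtype'
  have hsup : E i ⊔ ⨆ j : ↥({i}ᶜ : Set ι), E j = ⨆ j, E j :=
    hsub ▸ (iSup_split_single E i).symm
  rw [hsub]
  refine LinearDisjoint.of_finrank_sup ?_
  rw [hsup, finrank_iSup_eq_prod E hE hnonab, Fintype.prod_eq_mul_prod_compl i,
    finrank_iSup_eq_prod (fun j : ↥({i}ᶜ : Set ι) => E j) (hE.comp Subtype.val_injective)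
      fun j => hnonab j,
    Finset.prod_set_coe (f := fun j => Module.finrank K (E j))]
  simp

end IntermediateField

theorem linearDisjoint_of_simple_nonabelian_galois_general
    (K Ω : Type*) [Field K] [Field Ω] [Algebra K Ω]
    (n : ℕ) (E : Fin n → IntermediateField K Ω)
    (hdist : Function.Injective E)
    [∀ i, FiniteDimensional K (E i)]
    [∀ i, IsGalois K (E i)]
    (hsimple : ∀ i, IsSimpleGroup ((E i) ≃ₐ[K] (E i)))
    (hnonab : ∀ i, ¬ ∀ a b : (E i) ≃ₐ[K] (E i), a * b = b * a) :
    (∀ i, (E i).LinearDisjoint ↥(⨆ j ∈ ({i}ᶜ : Set (Fin n)), E j)) ∧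
      Nonempty ((↥(⨆ i, E i) ≃ₐ[K] ↥(⨆ i, E i)) ≃* ∀ i, (E i) ≃ₐ[K] (E i)) :=
  have := hsimple
  ⟨IntermediateField.linearDisjoint_iSup_compl E hdist hnonab,
    ⟨IntermediateField.iSupGalEquivPi E hdist hnonab⟩⟩

/-- Finitely many pairwise distinct Galois extensions of `K` (inside a fixed algebraic
closure `Ω`), each with nonabelian finite simple Galois group over `K`, are linearly
disjoint over `K` (each one is linearly disjoint from the compositum of the others);
in particular the Galois group of their compositum over `K` is isomorphic to the direct
product of the individual Galois groups. -/
theorem linearDisjoint_of_simple_nonabelian_galois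
    (K Ω : Type*) [Field K] [Field Ω] [Algebra K Ω] [IsAlgClosure K Ω]
    (n : ℕ) (E : Fin n → IntermediateField K Ω)
    (hdist : Function.Injective E)
    [∀ i, FiniteDimensional K (E i)]
    [∀ i, IsGalois K (E i)]
    (hsimple : ∀ i, IsSimpleGroup ((E i) ≃ₐ[K] (E i)))
    (hnonab : ∀ i, ¬ ∀ a b : (E i) ≃ₐ[K] (E i), a * b = b * a) :
    (∀ i, (E i).LinearDisjoint ↥(⨆ j ∈ ({i}ᶜ : Set (Fin n)), E j)) ∧
      Nonempty ((↥(⨆ i, E i) ≃ₐ[K] ↥(⨆ i, E i)) ≃* ∀ i, (E i) ≃ₐ[K] (E i)) :=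
  linearDisjoint_of_simple_nonabelian_galois_general K Ω n E hdist hsimple hnonab
end

section
/- Let N be a normal subgroup of a direct product S_1 × ⋯ × S_{n-1} of nonabelian finite simple groups such that the quotient is isomorphic to a nonabelian finite simple group S_n. Then N = T_1 × ⋯ × T_{n-1} where each T_i is either trivial or S_i, and there is exactly one index k with T_k trivial and S_k ≅ S_n. -/
/-!
If `n ∈ N` and `s ∈ Sᵢ`, then `⁅n, s⁆ = ⁅nᵢ, s⁆` lies in `N ∩ Sᵢ`, a normal subgroup of the
simple group `Sᵢ`. As `Sᵢ` has trivial centre, `N` therefore either contains `Sᵢ` or projects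
trivially onto it, so `N = ∏ Tᵢ` with each `Tᵢ` trivial or everything, and
`(∏ Sᵢ) ⧸ N ≅ ∏ Sᵢ ⧸ Tᵢ`. A simple product has exactly one nontrivial factor, onto which it
projects isomorphically; that factor is the unique `Sₖ` with `Tₖ = 1`, and `Sₖ ≅ S'`.
-/

open Subgroup
open scoped commutatorElement

theorem IsSimpleGroup.center_eq_bot {G : Type*} [Group G] [IsSimpleGroup G]
    (h : ¬ ∀ a b : G, a * b = b * a) : center G = ⊥ :=
  (center G).normal_of_characteristic.eq_bot_or_eq_top.resolve_right fun htop =>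
    h fun a b => (mem_center_iff.mp (htop ▸ mem_top b) a)

section Pi

variable {ι : Type*} {G : ι → Type*} [∀ i, Group (G i)]

instance Subgroup.pi_normal (H : ∀ i, Subgroup (G i)) [∀ i, (H i).Normal] :
    (pi Set.univ H).Normal where
  conj_mem n hn g i _ := Normal.conj_mem inferInstance (n i) (hn i trivial) (g i)

theorem Subgroup.Normal.mulSingle_commutatorElement_mem [DecidableEq ι]
    {N : Subgroup (∀ i, G i)} (hN : N.Normal) {n : ∀ i, G i} (hn : n ∈ N) (i : ι) (s : G i) :
    Pi.mulSingle i ⁅n i, s⁆ ∈ N := by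
  have hcomm : Pi.mulSingle i ⁅n i, s⁆ = ⁅n, Pi.mulSingle i s⁆ := by
    ext j
    by_cases hj : j = i
    · subst hj; simp [commutatorElement_def]
    · simp [commutatorElement_def, Pi.mulSingle_eq_of_ne hj]
  rw [hcomm]
  exact commutator_le_left N ⊤ (commutator_mem_commutator hn (mem_top _))

theorem Subgroup.Normal.map_mulSingle_map_eval_le [DecidableEq ι] {N : Subgroup (∀ i, G i)}
    (hN : N.Normal) (i : ι) [IsSimpleGroup (G i)] (hi : center (G i) = ⊥) :
    (N.map (Pi.evalMonoidHom G i)).map (MonoidHom.mulSingle G i) ≤ N := by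
  rintro _ ⟨_, ⟨n, hn, rfl⟩, rfl⟩
  by_cases hni : n i = 1
  · simp [hni]
  obtain ⟨s, hs⟩ : ∃ s : G i, ⁅n i, s⁆ ≠ 1 := by
    by_contra! h
    exact hni (by simpa [hi] using mem_center_iff.mpr fun s =>
      (commutatorElement_eq_one_iff_mul_comm.mp (h s)).symm)
  have hK : N.comap (MonoidHom.mulSingle G i) = ⊤ :=
    (hN.comap _).eq_bot_or_eq_top.resolve_left fun h =>
      hs (mem_bot.mp (h ▸ mem_comap.mpr (hN.mulSingle_commutatorElement_mem hn i s)))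
  exact mem_comap.mp (hK ▸ mem_top (n i))

theorem Subgroup.Normal.eq_pi_map_eval [Finite ι] [DecidableEq ι] {N : Subgroup (∀ i, G i)}
    (hN : N.Normal) [∀ i, IsSimpleGroup (G i)] (hG : ∀ i, center (G i) = ⊥) :
    N = pi Set.univ fun i => N.map (Pi.evalMonoidHom G i) :=
  le_antisymm (le_pi_iff.mpr fun _ _ => map_le_iff_le_comap.mp le_rfl)
    (pi_le_iff.mpr fun i => hN.map_mulSingle_map_eval_le i (hG i))

noncomputable def QuotientGroup.piQuotientEquiv (H : ∀ i, Subgroup (G i)) [∀ i, (H i).Normal] :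
    (∀ i, G i) ⧸ pi Set.univ H ≃* ∀ i, G i ⧸ H i :=
  let φ : (∀ i, G i) →* ∀ i, G i ⧸ H i :=
    MonoidHom.pi fun i => (QuotientGroup.mk' (H i)).comp (Pi.evalMonoidHom G i)
  have hker : pi Set.univ H = φ.ker := by
    ext x
    simp [φ, mem_pi, funext_iff]
  (QuotientGroup.quotientMulEquivOfEq hker).trans
    (QuotientGroup.quotientKerEquivOfSurjective φ fun y =>
      ⟨fun i => (y i).out, funext fun i => QuotientGroup.out_eq' (y i)⟩)

namespace IsSimpleGroup

variable [IsSimpleGroup (∀ i, G i)]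

theorem exists_nontrivial : ∃ i, Nontrivial (G i) := by
  by_contra! h
  exact not_nontrivial (∀ i, G i) inferInstance

theorem injective_evalMonoidHom (i : ι) [Nontrivial (G i)] :
    Function.Injective (Pi.evalMonoidHom G i) :=
  (MonoidHom.ker_eq_bot_iff _).mp <| (MonoidHom.normal_ker _).eq_bot_or_eq_top.resolve_right
    fun h => by
      classical
      obtain ⟨a, ha⟩ := exists_ne (1 : G i)
      have : Pi.mulSingle i a ∈ (Pi.evalMonoidHom G i).ker := h ▸ mem_top _
      exact ha (by rwa [MonoidHom.mem_ker, Pi.coe_evalMonoidHom, Function.eval,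
        Pi.mulSingle_eq_same] at this)

theorem subsingleton_of_ne [DecidableEq ι] {i j : ι} [Nontrivial (G i)] (hji : j ≠ i) :
    Subsingleton (G j) :=
  ⟨fun a b => Pi.mulSingle_injective j <| injective_evalMonoidHom i <| by
    simp [Pi.mulSingle_eq_of_ne hji.symm]⟩

noncomputable def piMulEquiv (i : ι) [Nontrivial (G i)] : (∀ j, G j) ≃* G i :=
  MulEquiv.ofBijective (Pi.evalMonoidHom G i)
    ⟨injective_evalMonoidHom i, Function.surjective_eval i⟩

end IsSimpleGroup

end Pi

theorem normal_subgroup_of_product_with_simple_quotient_general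
    (m : ℕ) (S : Fin m → Type*) [∀ i, Group (S i)]
    (hsimple : ∀ i, IsSimpleGroup (S i))
    (hnonab : ∀ i, ¬ ∀ a b : S i, a * b = b * a)
    (S' : Type*) [Group S'] (hsimple' : IsSimpleGroup S')
    (N : Subgroup (∀ i, S i)) (hN : N.Normal)
    (hquot : Nonempty ((∀ i, S i) ⧸ N ≃* S')) :
    ∃ T : ∀ i, Subgroup (S i), N = Subgroup.pi Set.univ T ∧
      (∀ i, T i = ⊥ ∨ T i = ⊤) ∧
      ∃! k : Fin m, T k = ⊥ ∧
        (∀ i, i ≠ k → T i = ⊤) ∧ Nonempty (S k ≃* S') := by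
  obtain ⟨e⟩ := hquot
  set T : ∀ i, Subgroup (S i) := fun i => N.map (Pi.evalMonoidHom S i)
  have hTnormal : ∀ i, (T i).Normal := fun i => hN.map _ (Function.surjective_eval i)
  have hT : ∀ i, T i = ⊥ ∨ T i = ⊤ := fun i => (hTnormal i).eq_bot_or_eq_top
  have hNT : N = pi Set.univ T :=
    hN.eq_pi_map_eval fun i => IsSimpleGroup.center_eq_bot (hnonab i)
  let f : S' ≃* ∀ i, S i ⧸ T i := e.symm.trans
    ((QuotientGroup.quotientMulEquivOfEq hNT).trans (QuotientGroup.piQuotientEquiv T))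
  have : IsSimpleGroup (∀ i, S i ⧸ T i) := f.symm.isSimpleGroup
  have hbot : ∀ i, Nontrivial (S i ⧸ T i) ↔ T i = ⊥ := fun i =>
    QuotientGroup.nontrivial_iff.trans ⟨(hT i).resolve_right, fun h => h ▸ bot_ne_top⟩
  obtain ⟨k, hk⟩ := IsSimpleGroup.exists_nontrivial (G := fun i => S i ⧸ T i)
  refine ⟨T, hNT, hT, k, ⟨(hbot k).mp hk, fun i hi => ?_, ⟨?_⟩⟩, fun j ⟨hj, _⟩ => ?_⟩
  · exact QuotientGroup.subsingleton_iff.mp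
      (IsSimpleGroup.subsingleton_of_ne (G := fun i => S i ⧸ T i) hi)
  · exact (QuotientGroup.quotientBot.symm.trans
      (QuotientGroup.quotientMulEquivOfEq ((hbot k).mp hk).symm)).trans
      ((IsSimpleGroup.piMulEquiv k).symm.trans f.symm)
  · by_contra hjk
    exact not_nontrivial_iff_subsingleton.mpr
      (IsSimpleGroup.subsingleton_of_ne (G := fun i => S i ⧸ T i) hjk) ((hbot j).mpr hj)

/-- Let `N` be a normal subgroup of a direct product `S_1 × ⋯ × S_m` of nonabelian
finite simple groups such that the quotient is isomorphic to a nonabelian finite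
simple group `S'`. Then `N = T_1 × ⋯ × T_m` where each `T_i` is trivial or all of
`S_i`, and there is exactly one index `k` with `T_k` trivial; moreover `S_k ≅ S'`. -/
theorem normal_subgroup_of_product_with_simple_quotient
    (m : ℕ) (S : Fin m → Type*) [∀ i, Group (S i)] [∀ i, Finite (S i)]
    (hsimple : ∀ i, IsSimpleGroup (S i))
    (hnonab : ∀ i, ¬ ∀ a b : S i, a * b = b * a)
    (S' : Type*) [Group S'] [Finite S'] (hsimple' : IsSimpleGroup S')
    (hnonab' : ¬ ∀ a b : S', a * b = b * a)
    (N : Subgroup (∀ i, S i)) (hN : N.Normal)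
    (hquot : Nonempty ((∀ i, S i) ⧸ N ≃* S')) :
    ∃ T : ∀ i, Subgroup (S i), N = Subgroup.pi Set.univ T ∧
      (∀ i, T i = ⊥ ∨ T i = ⊤) ∧
      ∃! k : Fin m, T k = ⊥ ∧
        (∀ i, i ≠ k → T i = ⊤) ∧ Nonempty (S k ≃* S') :=
  normal_subgroup_of_product_with_simple_quotient_general m S hsimple hnonab S' hsimple' N hN hquot
end

section
/- Let F be a field, and for a multiset a = {a_1,…,a_{n-1}} of n−1 distinct elements of F define the polynomial S_a(X) = S(a_1,…,a_{n-1},X) ∈ F[X], where S is the complete homogeneous symmetric polynomial of degree n−1 in n variables. Then for a, b ∈ F^{[n-1]}, S_a(X) = S_b(X) as polynomials if and only if a = b as sets. -/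
/-- The complete homogeneous symmetric function of degree `d` evaluated at the
(distinct) elements of a finite set `s`: the sum, over all multisets of size `d`
with entries in `s`, of the product of the entries. -/
noncomputable def completeHomogeneousEval {F : Type*} [CommRing F] [DecidableEq F]
    (s : Finset F) (d : ℕ) : F :=
  ∑ t ∈ s.sym d, (t : Multiset F).prod

section Aux

open Polynomial Finset

variable {F : Type*} [Field F] [DecidableEq F]

lemma che_zero (s : Finset F) : completeHomogeneousEval s 0 = 1 := by
  simp only [completeHomogeneousEval, Finset.sym_zero, Finset.sum_singleton]
  rfl

lemma che_empty (d : ℕ) : completeHomogeneousEval (∅ : Finset F) (d + 1) = 0 := by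
  simp [completeHomogeneousEval]

lemma che_insert {c : F} {s : Finset F} (hc : c ∉ s) (d : ℕ) :
    completeHomogeneousEval (insert c s) (d + 1)
      = completeHomogeneousEval s (d + 1) + c * completeHomogeneousEval (insert c s) d := by
  classical
  simp only [completeHomogeneousEval]
  rw [← Finset.sum_filter_add_sum_filter_not ((insert c s).sym (d + 1)) (fun t => c ∈ t)]
  have h1 : ((insert c s).sym (d + 1)).filter (fun t => ¬ c ∈ t) = s.sym (d + 1) := by
    ext t
    simp only [Finset.mem_filter, Finset.mem_sym_iff, Finset.mem_insert]
    constructor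
    · rintro ⟨h, hnc⟩ x hx
      rcases h x hx with rfl | hxs
      · exact absurd hx hnc
      · exact hxs
    · intro h
      exact ⟨fun x hx => Or.inr (h x hx), fun hct => hc (h c hct)⟩
  have h2 : ((insert c s).sym (d + 1)).filter (fun t => c ∈ t)
      = ((insert c s).sym d).image (Sym.cons c) := by
    ext t
    simp only [Finset.mem_filter, Finset.mem_image, Finset.mem_sym_iff]
    constructor
    · rintro ⟨h, hct⟩
      refine ⟨t.erase c hct, fun x hx => ?_, Sym.cons_erase hct⟩
      apply h
      have hx' : x ∈ (t.erase c hct : Multiset F) := hx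
      rw [Sym.coe_erase] at hx'
      exact Multiset.mem_of_mem_erase hx'
    · rintro ⟨u, hu, rfl⟩
      refine ⟨fun x hx => ?_, Sym.mem_cons_self c u⟩
      rcases Sym.mem_cons.mp hx with rfl | hxu
      · exact Finset.mem_insert_self _ _
      · exact hu x hxu
  rw [h1, h2, Finset.sum_image (fun u _ v _ h => (Sym.cons_inj_right c u v).mp h),
    Finset.mul_sum]
  rw [add_comm]
  congr 1
  refine Finset.sum_congr rfl fun u _ => ?_
  rw [Sym.coe_cons, Multiset.prod_cons]

/-- `U s N = ∑_{i=0}^{N} h_{N-i}(s) X^i`. -/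
noncomputable def Upoly (s : Finset F) (N : ℕ) : Polynomial F :=
  ∑ i ∈ Finset.range (N + 1), Polynomial.C (completeHomogeneousEval s (N - i)) * Polynomial.X ^ i

lemma coeff_Upoly (s : Finset F) (N k : ℕ) :
    (Upoly s N).coeff k = if k ≤ N then completeHomogeneousEval s (N - k) else 0 := by
  simp [Upoly, Polynomial.finset_sum_coeff, Polynomial.coeff_C_mul, Polynomial.coeff_X_pow,
    Finset.sum_ite_eq, Nat.lt_succ_iff]

lemma Upoly_empty (N : ℕ) : Upoly (∅ : Finset F) N = Polynomial.X ^ N := by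
  ext k
  rw [coeff_Upoly, Polynomial.coeff_X_pow]
  rcases lt_trichotomy k N with h | rfl | h
  · rw [if_pos h.le, if_neg (by omega)]
    obtain ⟨j, hj⟩ : ∃ j, N - k = j + 1 := ⟨N - k - 1, by omega⟩
    rw [hj, che_empty]
  · simp [che_zero]
  · rw [if_neg (by omega), if_neg (by omega)]

lemma Upoly_step {c : F} {s : Finset F} (hc : c ∉ s) (N : ℕ) :
    (Polynomial.X - Polynomial.C c) * Upoly (insert c s) N
      = Polynomial.X * Upoly s N
        - Polynomial.C (c * completeHomogeneousEval (insert c s) N) := by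
  ext k
  rcases k with _ | k
  · simp [Polynomial.mul_coeff_zero, coeff_Upoly]
  · rw [sub_mul, Polynomial.coeff_sub, Polynomial.coeff_X_mul, Polynomial.coeff_sub,
      Polynomial.coeff_X_mul, Polynomial.coeff_C_mul, Polynomial.coeff_C,
      if_neg (Nat.succ_ne_zero k)]
    simp only [coeff_Upoly]
    rcases lt_trichotomy k N with h | rfl | h
    · rw [if_pos h.le, if_pos (Nat.succ_le_of_lt h), if_pos h.le]
      have hd : N - k = (N - (k + 1)) + 1 := by omega
      rw [hd, che_insert hc]
      have h2 : N - (k + 1) + 1 = N - k := by omega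
      ring
    · rw [if_pos le_rfl, if_neg (by omega), if_pos le_rfl, Nat.sub_self, che_zero, che_zero]
      ring
    · rw [if_neg (by omega), if_neg (by omega), if_neg (by omega)]
      ring

lemma prod_Upoly (s : Finset F) (N : ℕ) :
    ∃ E : Polynomial F,
      (∏ x ∈ s, (Polynomial.X - Polynomial.C x)) * Upoly s N
          = Polynomial.X ^ (N + s.card) + E
        ∧ ∀ k, s.card ≤ k → E.coeff k = 0 := by
  classical
  induction s using Finset.induction_on with
  | empty =>
      refine ⟨0, ?_, fun k _ => rfl⟩
      simp [Upoly_empty]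
  | @insert c s hc ih =>
      obtain ⟨E, hE, hEc⟩ := ih
      have hstep := Upoly_step hc N
      have hP : (∏ x ∈ s, (Polynomial.X - Polynomial.C x)).natDegree = s.card := by
        rw [Polynomial.natDegree_prod _ _ (fun x _ => Polynomial.X_sub_C_ne_zero x)]
        simp
      refine ⟨Polynomial.X * E
          - Polynomial.C (c * completeHomogeneousEval (insert c s) N)
            * ∏ x ∈ s, (Polynomial.X - Polynomial.C x), ?_, ?_⟩
      · rw [Finset.prod_insert hc, Finset.card_insert_of_notMem hc]
        have hexp : N + (s.card + 1) = (N + s.card) + 1 := rfl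
        rw [hexp, pow_succ]
        linear_combination (∏ x ∈ s, (Polynomial.X - Polynomial.C x)) * hstep
          + Polynomial.X * hE
      · intro k hk
        rw [Finset.card_insert_of_notMem hc] at hk
        obtain ⟨j, rfl⟩ : ∃ j, k = j + 1 := ⟨k - 1, by omega⟩
        rw [Polynomial.coeff_sub, Polynomial.coeff_X_mul, hEc j (by omega),
          Polynomial.coeff_C_mul,
          Polynomial.coeff_eq_zero_of_natDegree_lt (by rw [hP]; omega)]
        ring

lemma Upoly_natDegree (s : Finset F) (N : ℕ) : (Upoly s N).natDegree = N := by
  have hle : (Upoly s N).natDegree ≤ N := by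
    apply Polynomial.natDegree_le_iff_coeff_eq_zero.mpr
    intro k hk
    rw [coeff_Upoly, if_neg (by omega)]
  have hge : N ≤ (Upoly s N).natDegree := by
    apply Polynomial.le_natDegree_of_ne_zero
    rw [coeff_Upoly, if_pos le_rfl, Nat.sub_self, che_zero]
    exact one_ne_zero
  omega

lemma Upoly_monic (s : Finset F) (N : ℕ) : (Upoly s N).Monic := by
  unfold Polynomial.Monic Polynomial.leadingCoeff
  rw [Upoly_natDegree, coeff_Upoly, if_pos le_rfl, Nat.sub_self, che_zero]

end Aux

/-- For `(m)`-element subsets `a, b` of a field `F` (here `m` plays the role of `n−1`),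
the polynomials `S_a(X) = S(a_1,…,a_m,X) = Σ_{i=0}^{m} S_{m,i}(a) X^{m-i}` and `S_b(X)`
(where `S` is the complete homogeneous symmetric polynomial of degree `m` in `m+1`
variables) are equal if and only if `a = b`. -/
theorem completeHomogeneous_polynomial_inj
    (F : Type*) [Field F] [DecidableEq F] (m : ℕ) (a b : Finset F)
    (ha : a.card = m) (hb : b.card = m) :
    (∑ i ∈ Finset.range (m + 1),
        Polynomial.C (completeHomogeneousEval a i) * Polynomial.X ^ (m - i))
      = (∑ i ∈ Finset.range (m + 1),
        Polynomial.C (completeHomogeneousEval b i) * Polynomial.X ^ (m - i))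
      ↔ a = b := by
  classical
  constructor
  · intro h
    have key : ∀ s : Finset F,
        (∑ i ∈ Finset.range (m + 1),
          Polynomial.C (completeHomogeneousEval s i) * Polynomial.X ^ (m - i)) = Upoly s m := by
      intro s
      rw [Upoly, ← Finset.sum_range_reflect]
      refine Finset.sum_congr rfl fun j hj => ?_
      rw [Finset.mem_range] at hj
      have h1 : m + 1 - 1 - j = m - j := by omega
      rw [h1, Nat.sub_sub_self (by omega : j ≤ m)]
    rw [key a, key b] at h
    obtain ⟨Ea, hEa, hEac⟩ := prod_Upoly a m
    obtain ⟨Eb, hEb, hEbc⟩ := prod_Upoly b m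
    rw [ha] at hEa hEac
    rw [hb] at hEb hEbc
    set Pa := ∏ x ∈ a, (Polynomial.X - Polynomial.C x) with hPa
    set Pb := ∏ x ∈ b, (Polynomial.X - Polynomial.C x) with hPb
    have hPP : Pa = Pb := by
      by_contra hne
      have hD : Pa - Pb ≠ 0 := sub_ne_zero.mpr hne
      have hU := Upoly_monic a m
      have hmul : Upoly a m * (Pa - Pb) = Ea - Eb := by
        linear_combination hEa - hEb - Pb * h
      have hne0 : Upoly a m * (Pa - Pb) ≠ 0 := mul_ne_zero hU.ne_zero hD
      have hlc : (Upoly a m * (Pa - Pb)).coeff ((Upoly a m * (Pa - Pb)).natDegree) ≠ 0 :=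
        Polynomial.leadingCoeff_ne_zero.mpr hne0
      apply hlc
      have hdeg : (Upoly a m * (Pa - Pb)).natDegree = m + (Pa - Pb).natDegree := by
        rw [Polynomial.natDegree_mul hU.ne_zero hD, Upoly_natDegree]
      rw [hdeg, hmul, Polynomial.coeff_sub, hEac _ (Nat.le_add_right _ _),
        hEbc _ (Nat.le_add_right _ _), sub_zero]
    have hroots := congrArg Polynomial.roots hPP
    rw [hPa, hPb, Polynomial.roots_prod_X_sub_C, Polynomial.roots_prod_X_sub_C] at hroots
    exact Finset.val_inj.mp hroots
  · rintro rfl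
    rfl
end

section
/- Let K be a perfect field with exactly one extension of degree n for every positive integer n (so Gal(K) ≅ Ẑ), let σ be a topological generator of Gal(K), let L be a regular extension of K, and let τ ∈ Gal(L) extend σ. If M is the fixed field of τ in the algebraic closure of L, then K is algebraically closed in M, and M has a unique extension of degree n for every n (equivalently, τ is a topological generator of Gal(M) ≅ Ẑ). -/
/-!
Restricted to a finite Galois subextension, an automorphism whose fixed field is the base field
generates the whole Galois group, which is therefore cyclic; subgroups of a finite cyclic group are
determined by their order, so such a field has at most one extension of each degree inside the
big field. The fixed field `M` of `τ` is perfect (it contains the `p`-th roots of its elements) and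
`τ` has fixed field `M`, which gives uniqueness. For existence, let `a` generate the degree-`n`
extension of `K`: its `σ`-orbit has `n` points, hence so has the `τ`-orbit of `a` in `L̃`, and these
are roots of the minimal polynomial of `a` over `M`, so `M(a)` has degree `n`. Finally, an element
of `M` algebraic over `K` lies in `K̃` and is fixed by `σ`, hence lies in `K`.
-/

open IntermediateField Polynomial Module

theorem Subgroup.eq_of_natCard_eq_of_isCyclic {G : Type*} [Group G] [Finite G] [IsCyclic G]
    {H₁ H₂ : Subgroup G} (h : Nat.card H₁ = Nat.card H₂) : H₁ = H₂ := by
  classical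
  have := Fintype.ofFinite G
  -- `H` fills up the `card H`-torsion, which in a cyclic group has at most `card H` elements.
  have torsion : ∀ H : Subgroup G, (H : Set G) = {x | x ^ Nat.card H = 1} := by
    intro H
    refine Set.eq_of_subset_of_ncard_le (fun x hx => ?_) ?_ (Set.toFinite _)
    · exact congrArg Subtype.val (pow_card_eq_one' (x := (⟨x, hx⟩ : H)))
    · rw [Set.ncard_eq_toFinset_card', Set.ncard_eq_toFinset_card', Set.toFinset_ofPred,
        ← Nat.card_eq_card_toFinset, SetLike.coe_sort_coe]
      exact IsCyclic.card_pow_eq_one_le Nat.card_pos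
  exact SetLike.coe_injective (by rw [torsion H₁, torsion H₂, h])

section

variable {F Ω : Type*} [Field F] [Field Ω] [Algebra F Ω]

theorem IsGalois.eq_of_finrank_eq_of_isCyclic [FiniteDimensional F Ω] [IsGalois F Ω]
    [IsCyclic Gal(Ω/F)] {E₁ E₂ : IntermediateField F Ω} (h : finrank F E₁ = finrank F E₂) :
    E₁ = E₂ := by
  have hcard : Nat.card E₁.fixingSubgroup = Nat.card E₂.fixingSubgroup := by
    rw [card_fixingSubgroup_eq_finrank, card_fixingSubgroup_eq_finrank]
    refine Nat.eq_of_mul_eq_mul_left (finrank_pos (R := F) (M := E₁)) ?_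
    rw [finrank_mul_finrank, h, finrank_mul_finrank]
  rw [← fixedField_fixingSubgroup E₁, ← fixedField_fixingSubgroup E₂,
    Subgroup.eq_of_natCard_eq_of_isCyclic hcard]

/-- For `Ω/F` Galois this says that `σ` topologically generates `Gal(Ω/F)`. -/
def AlgEquiv.IsTopologicalGenerator (σ : Ω ≃ₐ[F] Ω) : Prop :=
  ∀ x, σ x = x → x ∈ Set.range (algebraMap F Ω)

namespace AlgEquiv.IsTopologicalGenerator

variable {σ : Ω ≃ₐ[F] Ω}

theorem zpowers_restrictNormal_eq_top (hσ : σ.IsTopologicalGenerator)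
    (E : IntermediateField F Ω) [Normal F E] [FiniteDimensional F E] :
    Subgroup.zpowers (σ.restrictNormal E) = ⊤ := by
  have hfix : fixedField (Subgroup.zpowers (σ.restrictNormal E)) = ⊥ := by
    refine eq_bot_iff.2 fun x hx => ?_
    obtain ⟨k, hk⟩ := hσ x <| (σ.restrictNormal_apply E x).symm.trans
      (congrArg Subtype.val (hx ⟨_, Subgroup.mem_zpowers _⟩))
    exact mem_bot.2 ⟨k, Subtype.ext hk⟩
  rw [← fixingSubgroup_fixedField (Subgroup.zpowers _), hfix, fixingSubgroup_bot]

theorem isCyclic (hσ : σ.IsTopologicalGenerator) (E : IntermediateField F Ω) [Normal F E]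
    [FiniteDimensional F E] : IsCyclic Gal(E/F) :=
  isCyclic_iff_exists_zpowers_eq_top.2 ⟨_, hσ.zpowers_restrictNormal_eq_top E⟩

theorem eq_of_finrank_eq [IsGalois F Ω] (hσ : σ.IsTopologicalGenerator)
    {E₁ E₂ : IntermediateField F Ω} [FiniteDimensional F E₁] [FiniteDimensional F E₂]
    (h : finrank F E₁ = finrank F E₂) : E₁ = E₂ := by
  let N := normalClosure F ↥(E₁ ⊔ E₂) Ω
  have := hσ.isCyclic N
  have h₁ : E₁ ≤ N := le_sup_left.trans (le_normalClosure _)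
  have h₂ : E₂ ≤ N := le_sup_right.trans (le_normalClosure _)
  rw [← lift_restrict h₁, ← lift_restrict h₂]
  refine congrArg lift (IsGalois.eq_of_finrank_eq_of_isCyclic ?_)
  exact ((restrictAlgEquiv h₁).toLinearEquiv.finrank_eq.symm.trans h).trans
    (restrictAlgEquiv h₂).toLinearEquiv.finrank_eq

theorem injOn_pow_apply (hσ : σ.IsTopologicalGenerator) {a : Ω} (ha : IsIntegral F a)
    [IsGalois F F⟮a⟯] : Set.InjOn (fun i : ℕ => (σ ^ i) a) (Set.Iio (finrank F F⟮a⟯)) := by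
  have := adjoin.finiteDimensional ha
  set s := AlgEquiv.restrictNormalHom F⟮a⟯ σ
  have hord : orderOf s = finrank F F⟮a⟯ :=
    (orderOf_eq_card_of_zpowers_eq_top (hσ.zpowers_restrictNormal_eq_top _)).trans
    (IsGalois.card_aut_eq_finrank F F⟮a⟯)
  intro i hi j hj hij
  refine pow_injOn_Iio_orderOf (x := s) (hord ▸ hi) (hord ▸ hj) ?_
  apply AlgEquiv.coe_toAlgHom_injective
  refine adjoin_algHom_ext F fun x (hx : x = a) => Subtype.ext ?_
  subst hx
  simpa only [AlgEquiv.coe_toAlgHom, s, ← map_pow, AlgEquiv.restrictNormalHom_apply] using hij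

theorem exists_injOn_pow_apply [IsGalois F Ω] (hσ : σ.IsTopologicalGenerator) {n : ℕ}
    (hn : 0 < n) (huniq : ∃! E : IntermediateField F Ω, finrank F E = n) :
    ∃ a : Ω, IsIntegral F a ∧ (minpoly F a).natDegree = n ∧
      Set.InjOn (fun i : ℕ => (σ ^ i) a) (Set.Iio n) := by
  obtain ⟨E, hE, hEuniq⟩ := huniq
  have : FiniteDimensional F E := Module.finite_of_finrank_pos (hE ▸ hn)
  -- the conjugates of `E` have the same degree, so they all coincide with `E`
  have : Normal F E := normal_iff_forall_map_eq'.2 fun ψ =>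
    hEuniq _ ((equivMap E ψ.toAlgHom).toLinearEquiv.finrank_eq.symm.trans hE)
  have : IsGalois F E := { to_isSeparable := Algebra.isSeparable_tower_bot_of_isSeparable F E Ω }
  obtain ⟨a, rfl⟩ : ∃ a : Ω, F⟮a⟯ = E := by
    obtain ⟨α, hα⟩ := Field.exists_primitive_element F E
    exact ⟨α, by rw [← lift_adjoin_simple, hα, lift_top]⟩
  have ha : IsIntegral F a :=
    IntermediateField.isIntegral_iff.1 (IsIntegral.of_finite F (AdjoinSimple.gen F a))
  exact ⟨a, ha, (adjoin.finrank ha).symm.trans hE, hE ▸ hσ.injOn_pow_apply ha⟩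

end AlgEquiv.IsTopologicalGenerator

theorem le_natDegree_minpoly_of_injOn (g : Ω ≃ₐ[F] Ω) {b : Ω} (hb : IsIntegral F b) {n : ℕ}
    (hinj : Set.InjOn (fun i : ℕ => (g ^ i) b) (Set.Iio n)) :
    n ≤ (minpoly F b).natDegree := by
  classical
  have hroots : ((Finset.range n).image fun i => (g ^ i) b).val ⊆
      ((minpoly F b).map (algebraMap F Ω)).roots := fun x hx => by
    obtain ⟨i, -, rfl⟩ := Finset.mem_image.1 (Finset.mem_def.2 hx)
    rw [mem_roots_map_of_injective (algebraMap F Ω).injective (minpoly.ne_zero hb),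
      ← aeval_def, aeval_algEquiv, AlgHom.comp_apply, minpoly.aeval, map_zero]
  calc n = ((Finset.range n).image fun i => (g ^ i) b).card := by
        rw [Finset.card_image_of_injOn (by simpa using hinj), Finset.card_range]
    _ ≤ ((minpoly F b).map (algebraMap F Ω)).natDegree := card_le_degree_of_subset_roots hroots
    _ = (minpoly F b).natDegree := natDegree_map _

theorem finrank_adjoin_simple_eq_natDegree_of_injOn {M : Type*} [Field M] [Algebra F M]
    [Algebra M Ω] [IsScalarTower F M Ω] (g : Ω ≃ₐ[M] Ω) {b : Ω} (hb : IsIntegral F b)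
    (hinj : Set.InjOn (fun i : ℕ => (g ^ i) b) (Set.Iio (minpoly F b).natDegree)) :
    finrank M M⟮b⟯ = (minpoly F b).natDegree := by
  rw [adjoin.finrank hb.tower_top]
  refine le_antisymm ?_ (le_natDegree_minpoly_of_injOn g hb.tower_top hinj)
  refine (natDegree_le_of_dvd (minpoly.dvd_map_of_isScalarTower F M b) ?_).trans
    (natDegree_map _).le
  exact (Polynomial.map_ne_zero_iff (algebraMap F M).injective).2 (minpoly.ne_zero hb)

theorem mem_range_algebraMap_of_isIntegral {A : Type*} [Field A] [IsAlgClosed A] [Algebra F A]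
    [Algebra A Ω] [IsScalarTower F A Ω] {x : Ω} (hx : IsIntegral F x) :
    x ∈ Set.range (algebraMap A Ω) := by
  have := adjoin.finiteDimensional (IsIntegral.tower_top (A := A) hx)
  have : A⟮x⟯ = ⊥ := eq_bot_of_isAlgClosed_of_isAlgebraic _
  exact mem_bot.1 (this ▸ mem_adjoin_simple_self A x)

theorem IntermediateField.perfectField_of_forall_mem_iff [PerfectField Ω] (τ : Ω ≃ₐ[F] Ω)
    (M : IntermediateField F Ω) (hM : ∀ x, x ∈ M ↔ τ x = x) : PerfectField M := by
  obtain ⟨p, _⟩ := ExpChar.exists M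
  have : ExpChar Ω p := expChar_of_injective_algebraMap (algebraMap M Ω).injective p
  have : PerfectRing M p := PerfectRing.ofSurjective _ _ fun y => by
    set x := (frobeniusEquiv Ω p).symm y
    have hx : x ^ p = y := frobeniusEquiv_symm_pow_p Ω p y
    -- `τ x` and `x` are both `p`-th roots of `y`
    have hxM : x ∈ M := (hM x).2 <| frobenius_inj Ω p <| by
      rw [frobenius_def, frobenius_def, ← map_pow, hx, (hM y).1 y.2]
    exact ⟨⟨x, hxM⟩, Subtype.ext hx⟩
  exact PerfectRing.toPerfectField M p

theorem IntermediateField.isGalois_of_forall_mem_iff [IsAlgClosure F Ω] (τ : Ω ≃ₐ[F] Ω)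
    (M : IntermediateField F Ω) (hM : ∀ x, x ∈ M ↔ τ x = x) : IsGalois M Ω := by
  have := IsAlgClosure.isAlgClosed F (K := Ω)
  have : Algebra.IsAlgebraic M Ω := Algebra.IsAlgebraic.tower_top (K := F) M
  have : IsAlgClosure M Ω := ⟨inferInstance, inferInstance⟩
  have : PerfectField M := M.perfectField_of_forall_mem_iff τ hM
  exact ⟨⟩

end

theorem fixedField_of_extension_of_generator_general
    (K Ktilde L Ltilde : Type*) [Field K] [Field Ktilde] [Field L] [Field Ltilde]
    [PerfectField K]
    [Algebra K Ktilde] [IsAlgClosure K Ktilde]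
    [Algebra K L]
    [Algebra L Ltilde] [IsAlgClosure L Ltilde]
    [Algebra K Ltilde] [Algebra Ktilde Ltilde]
    [IsScalarTower K L Ltilde] [IsScalarTower K Ktilde Ltilde]
    (huniq : ∀ n : ℕ, 1 ≤ n →
      ∃! E : IntermediateField K Ktilde, Module.finrank K E = n)
    (σ : Ktilde ≃ₐ[K] Ktilde)
    (hσ : ∀ x : Ktilde, σ x = x → ∃ k : K, algebraMap K Ktilde k = x)
    (τ : Ltilde ≃ₐ[L] Ltilde)
    (hτσ : ∀ x : Ktilde, τ (algebraMap Ktilde Ltilde x) = algebraMap Ktilde Ltilde (σ x))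
    (M : IntermediateField L Ltilde)
    (hM : ∀ x : Ltilde, x ∈ M ↔ τ x = x) :
    (∀ x : Ltilde, x ∈ M → IsIntegral K x → ∃ k : K, algebraMap K Ltilde k = x) ∧
      (∀ n : ℕ, 1 ≤ n →
        ∃! E : IntermediateField M Ltilde, Module.finrank M E = n) := by
  have := IsAlgClosure.isAlgClosed K (K := Ktilde)
  set ι := algebraMap Ktilde Ltilde
  refine ⟨fun x hxM hx => ?_, fun n hn => ?_⟩
  · obtain ⟨y, rfl⟩ := mem_range_algebraMap_of_isIntegral (A := Ktilde) hx
    obtain ⟨k, rfl⟩ := hσ y (ι.injective ((hτσ y).symm.trans ((hM _).1 hxM)))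
    exact ⟨k, IsScalarTower.algebraMap_apply K Ktilde Ltilde k⟩
  have : IsGalois K Ktilde := ⟨⟩
  obtain ⟨a, ha, hdeg, hinj⟩ :=
    AlgEquiv.IsTopologicalGenerator.exists_injOn_pow_apply hσ hn (huniq n hn)
  let τM : Ltilde ≃ₐ[M] Ltilde := { τ with commutes' := fun r => (hM r).1 r.2 }
  have hτM : τM.IsTopologicalGenerator := fun x hx => ⟨⟨x, (hM x).2 hx⟩, rfl⟩
  have hpow (i : ℕ) (x : Ktilde) : (τM ^ i) (ι x) = ι ((σ ^ i) x) := by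
    simp only [AlgEquiv.coe_pow]
    exact ((Function.Semiconj.iterate_right (f := ι) (fun x => (hτσ x).symm) i) x).symm
  have : IsScalarTower K M Ltilde := IsScalarTower.of_algebraMap_eq fun _ => rfl
  have hdegι : (minpoly K (ι a)).natDegree = n := by rwa [minpoly.algebraMap_eq ι.injective]
  have hfin : finrank M M⟮ι a⟯ = n := by
    refine (finrank_adjoin_simple_eq_natDegree_of_injOn τM ha.algebraMap ?_).trans hdegι
    rw [hdegι]
    refine fun i hi j hj h => hinj hi hj (ι.injective ?_)
    rwa [← hpow, ← hpow]
  have : IsGalois M Ltilde := M.isGalois_of_forall_mem_iff τ hM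
  refine ⟨M⟮ι a⟯, hfin, fun E hE => ?_⟩
  have : FiniteDimensional M E := Module.finite_of_finrank_pos (hE ▸ hn)
  have : FiniteDimensional M M⟮ι a⟯ := Module.finite_of_finrank_pos (hfin ▸ hn)
  exact hτM.eq_of_finrank_eq (hE.trans hfin.symm)

/-- Let `K` be a perfect field with exactly one extension of degree `n` (inside a fixed
algebraic closure `K̃`) for every `n ≥ 1`, let `σ` be a topological generator of the
absolute Galois group of `K` (i.e. its fixed field is exactly `K`), let `L` be a regular
extension of `K` (i.e. `K` is algebraically closed in `L`), and let `τ` be an element of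
the absolute Galois group of `L` (acting on an algebraic closure `L̃` of `L`) extending
`σ`. If `M` is the fixed field of `τ` in `L̃`, then `K` is algebraically closed in `M`
and `M` has a unique extension of degree `n` inside `L̃` for every `n ≥ 1`
(i.e. `τ` is a topological generator of `Gal(M) ≅ Ẑ`). -/
theorem fixedField_of_extension_of_generator
    (K Ktilde L Ltilde : Type*) [Field K] [Field Ktilde] [Field L] [Field Ltilde]
    [PerfectField K]
    [Algebra K Ktilde] [IsAlgClosure K Ktilde]
    [Algebra K L]
    [Algebra L Ltilde] [IsAlgClosure L Ltilde]
    [Algebra K Ltilde] [Algebra Ktilde Ltilde]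
    [IsScalarTower K L Ltilde] [IsScalarTower K Ktilde Ltilde]
    (huniq : ∀ n : ℕ, 1 ≤ n →
      ∃! E : IntermediateField K Ktilde, Module.finrank K E = n)
    (σ : Ktilde ≃ₐ[K] Ktilde)
    (hσ : ∀ x : Ktilde, σ x = x → ∃ k : K, algebraMap K Ktilde k = x)
    (hreg : ∀ x : L, IsIntegral K x → ∃ k : K, algebraMap K L k = x)
    (τ : Ltilde ≃ₐ[L] Ltilde)
    (hτσ : ∀ x : Ktilde, τ (algebraMap Ktilde Ltilde x) = algebraMap Ktilde Ltilde (σ x))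
    (M : IntermediateField L Ltilde)
    (hM : ∀ x : Ltilde, x ∈ M ↔ τ x = x) :
    (∀ x : Ltilde, x ∈ M → IsIntegral K x → ∃ k : K, algebraMap K Ltilde k = x) ∧
      (∀ n : ℕ, 1 ≤ n →
        ∃! E : IntermediateField M Ltilde, Module.finrank M E = n) :=
  fixedField_of_extension_of_generator_general K Ktilde L Ltilde huniq σ hσ τ hτσ M hM
end
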